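/- arXiv:2303.16534 — 6 statements merged into one kernel-verified Lean document; each statement's English description precedes it below -/
import Mathlib

section
/- The function φ(ρ,m) = |m|²/M(ρ) for M(ρ)>0, φ = 0 if (M(ρ),m)=(0,0), and φ = +∞ otherwise, where M(ρ) = (ρ−α)(β−ρ), is convex in (ρ,m) on ℝ × ℝ. -/
/-!
Write `φ(ρ, m) = q(m, M ρ)` with the quadratic-over-linear function `q(m, u) = m² / u`
(extended by `0` at `(0, 0)` and `+∞` elsewhere off `u > 0`). The function `q` is jointly
convex, by the two-term Cauchy–Schwarz inequality, and nonincreasing in `u`; the mobility `M` is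
concave. So at `ρ = t ρ₁ + (1 - t) ρ₂` we get `φ(ρ, m) = q(m, M ρ) ≤ q(m, t M ρ₁ + (1 - t) M ρ₂)`,
which the convexity of `q` bounds.
-/

noncomputable def quadOverLin (m u : ℝ) : EReal :=
  if 0 < u then ((m ^ 2 / u : ℝ) : EReal) else if u = 0 ∧ m = 0 then 0 else ⊤

section QuadOverLin

variable {m u : ℝ}

lemma quadOverLin_of_nonneg (hu : 0 ≤ u) (hm : u = 0 → m = 0) :
    quadOverLin m u = ((m ^ 2 / u : ℝ) : EReal) := by
  rcases hu.eq_or_lt with rfl | hu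
  · simp [quadOverLin, hm rfl]
  · simp [quadOverLin, hu]

lemma quadOverLin_eq_top (h : ¬(0 ≤ u ∧ (u = 0 → m = 0))) : quadOverLin m u = ⊤ := by
  unfold quadOverLin
  rw [if_neg fun hu => h ⟨hu.le, fun h0 => absurd h0 hu.ne'⟩,
    if_neg fun h0 => h ⟨h0.1.ge, fun _ => h0.2⟩]

lemma quadOverLin_nonneg (m u : ℝ) : 0 ≤ quadOverLin m u := by
  unfold quadOverLin
  split_ifs with hu
  · exact EReal.coe_nonneg.2 (div_nonneg (sq_nonneg m) hu.le)
  · exact le_rfl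
  · exact le_top

lemma quadOverLin_antitone (m : ℝ) : Antitone (quadOverLin m) := by
  intro u u' huu'
  by_cases h : 0 ≤ u ∧ (u = 0 → m = 0)
  · obtain ⟨hu, hm⟩ := h
    rw [quadOverLin_of_nonneg hu hm,
      quadOverLin_of_nonneg (hu.trans huu') fun h0 => hm (le_antisymm (h0 ▸ huu') hu)]
    rcases hu.eq_or_lt with rfl | hu
    · simp [hm rfl]
    · exact EReal.coe_le_coe_iff.2 (div_le_div_of_nonneg_left (sq_nonneg m) hu huu')
  · rw [quadOverLin_eq_top h]
    exact le_top

end QuadOverLin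

lemma sq_eq_sq_div_mul {m u : ℝ} (hm : u = 0 → m = 0) : m ^ 2 = m ^ 2 / u * u := by
  rcases eq_or_ne u 0 with rfl | hu
  · simp [hm rfl]
  · exact (div_mul_cancel₀ _ hu).symm

lemma sq_add_le_mul_add {a b r s x y : ℝ} (hr : 0 ≤ r) (hs : 0 ≤ s) (hx : 0 ≤ x) (hy : 0 ≤ y)
    (ha : a ^ 2 = r * x) (hb : b ^ 2 = s * y) : (a + b) ^ 2 ≤ (r + s) * (x + y) := by
  -- AM–GM on `r y` and `s x`, whose product is `(a b)²`
  have cross : 2 * (a * b) ≤ r * y + s * x := by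
    nlinarith [sq_nonneg (r * y - s * x), mul_nonneg hr hy, mul_nonneg hs hx]
  nlinarith

lemma sq_div_convex_comb_le {m₁ m₂ u₁ u₂ t : ℝ} (hu₁ : 0 ≤ u₁) (hu₂ : 0 ≤ u₂)
    (hm₁ : u₁ = 0 → m₁ = 0) (hm₂ : u₂ = 0 → m₂ = 0) (ht₀ : 0 ≤ t) (ht₁ : t ≤ 1) :
    (t * m₁ + (1 - t) * m₂) ^ 2 / (t * u₁ + (1 - t) * u₂)
      ≤ t * (m₁ ^ 2 / u₁) + (1 - t) * (m₂ ^ 2 / u₂) := by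
  have hs : 0 ≤ 1 - t := by linarith
  rcases (by positivity : 0 ≤ t * u₁ + (1 - t) * u₂).eq_or_lt with hu | hu
  · rw [← hu, div_zero]
    positivity
  rw [div_le_iff₀ hu]
  refine sq_add_le_mul_add (by positivity) (by positivity) (by positivity) (by positivity) ?_ ?_
  · linear_combination t ^ 2 * sq_eq_sq_div_mul hm₁
  · linear_combination (1 - t) ^ 2 * sq_eq_sq_div_mul hm₂

lemma quadOverLin_convex_comb_le (m₁ m₂ u₁ u₂ : ℝ) {t : ℝ} (ht₀ : 0 ≤ t) (ht₁ : t ≤ 1) :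
    quadOverLin (t * m₁ + (1 - t) * m₂) (t * u₁ + (1 - t) * u₂)
      ≤ (t : EReal) * quadOverLin m₁ u₁ + ((1 - t : ℝ) : EReal) * quadOverLin m₂ u₂ := by
  rcases ht₀.eq_or_lt with rfl | ht₀
  · simp
  rcases ht₁.eq_or_lt with rfl | ht₁
  · simp
  have hs : 0 < 1 - t := by linarith
  by_cases h₁ : 0 ≤ u₁ ∧ (u₁ = 0 → m₁ = 0)
  swap
  · rw [quadOverLin_eq_top h₁, EReal.coe_mul_top_of_pos ht₀, EReal.top_add_of_ne_bot]
    · exact le_top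
    · exact ne_bot_of_le_ne_bot EReal.zero_ne_bot
        (EReal.mul_nonneg (EReal.coe_nonneg.2 hs.le) (quadOverLin_nonneg _ _))
  by_cases h₂ : 0 ≤ u₂ ∧ (u₂ = 0 → m₂ = 0)
  swap
  · rw [quadOverLin_eq_top h₂, EReal.coe_mul_top_of_pos hs, EReal.add_top_of_ne_bot]
    · exact le_top
    · exact ne_bot_of_le_ne_bot EReal.zero_ne_bot
        (EReal.mul_nonneg (EReal.coe_nonneg.2 ht₀.le) (quadOverLin_nonneg _ _))
  obtain ⟨hu₁, hm₁⟩ := h₁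
  obtain ⟨hu₂, hm₂⟩ := h₂
  have hu : 0 ≤ t * u₁ + (1 - t) * u₂ := by positivity
  have hm : t * u₁ + (1 - t) * u₂ = 0 → t * m₁ + (1 - t) * m₂ = 0 := by
    intro h0
    have h0₁ : u₁ = 0 := by nlinarith [mul_nonneg hs.le hu₂]
    have h0₂ : u₂ = 0 := by nlinarith [mul_nonneg ht₀.le hu₁]
    simp [hm₁ h0₁, hm₂ h0₂]
  rw [quadOverLin_of_nonneg hu hm, quadOverLin_of_nonneg hu₁ hm₁, quadOverLin_of_nonneg hu₂ hm₂]
  exact_mod_cast sq_div_convex_comb_le hu₁ hu₂ hm₁ hm₂ ht₀.le ht₁.le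

lemma convex_comb_le_mobility (α β ρ₁ ρ₂ : ℝ) {t : ℝ} (ht₀ : 0 ≤ t) (ht₁ : t ≤ 1) :
    t * ((ρ₁ - α) * (β - ρ₁)) + (1 - t) * ((ρ₂ - α) * (β - ρ₂))
      ≤ (t * ρ₁ + (1 - t) * ρ₂ - α) * (β - (t * ρ₁ + (1 - t) * ρ₂)) := by
  have hgap : (t * ρ₁ + (1 - t) * ρ₂ - α) * (β - (t * ρ₁ + (1 - t) * ρ₂))
      - (t * ((ρ₁ - α) * (β - ρ₁)) + (1 - t) * ((ρ₂ - α) * (β - ρ₂)))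
      = t * (1 - t) * (ρ₁ - ρ₂) ^ 2 := by ring
  nlinarith [mul_nonneg (mul_nonneg ht₀ (sub_nonneg.2 ht₁)) (sq_nonneg (ρ₁ - ρ₂))]

theorem stmt_0_general (α β : ℝ)
    (M : ℝ → ℝ) (hM : ∀ ρ, M ρ = (ρ - α) * (β - ρ))
    (φ : ℝ × ℝ → EReal)
    (hφ : ∀ p, φ p =
      if 0 < M p.1 then ((p.2 ^ 2 / M p.1 : ℝ) : EReal)
      else if M p.1 = 0 ∧ p.2 = 0 then 0 else ⊤) :
    ∀ p q : ℝ × ℝ, ∀ t : ℝ, 0 ≤ t → t ≤ 1 →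
      φ (t • p + (1 - t) • q) ≤ (t : EReal) * φ p + ((1 - t : ℝ) : EReal) * φ q := by
  obtain rfl : φ = fun p => quadOverLin p.2 (M p.1) := funext hφ
  obtain rfl : M = fun ρ => (ρ - α) * (β - ρ) := funext hM
  rintro ⟨ρ₁, m₁⟩ ⟨ρ₂, m₂⟩ t ht₀ ht₁
  calc quadOverLin (t * m₁ + (1 - t) * m₂)
          ((t * ρ₁ + (1 - t) * ρ₂ - α) * (β - (t * ρ₁ + (1 - t) * ρ₂)))
      ≤ quadOverLin (t * m₁ + (1 - t) * m₂)
          (t * ((ρ₁ - α) * (β - ρ₁)) + (1 - t) * ((ρ₂ - α) * (β - ρ₂))) :=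
        quadOverLin_antitone _ (convex_comb_le_mobility α β ρ₁ ρ₂ ht₀ ht₁)
    _ ≤ _ := quadOverLin_convex_comb_le _ _ _ _ ht₀ ht₁

/-- The extended-real cost `φ(ρ,m) = m²/M(ρ)` if `M(ρ) > 0`, `0` if `(M(ρ),m) = (0,0)`,
`+∞` otherwise, with mobility `M(ρ) = (ρ-α)(β-ρ)`, is convex on `ℝ × ℝ`. -/
theorem stmt_0 (α β : ℝ) (hαβ : α < β)
    (M : ℝ → ℝ) (hM : ∀ ρ, M ρ = (ρ - α) * (β - ρ))
    (φ : ℝ × ℝ → EReal)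
    (hφ : ∀ p, φ p =
      if 0 < M p.1 then ((p.2 ^ 2 / M p.1 : ℝ) : EReal)
      else if M p.1 = 0 ∧ p.2 = 0 then 0 else ⊤) :
    ∀ p q : ℝ × ℝ, ∀ t : ℝ, 0 ≤ t → t ≤ 1 →
      φ (t • p + (1 - t) • q) ≤ (t : EReal) * φ p + ((1 - t : ℝ) : EReal) * φ q :=
  stmt_0_general α β M hM φ hφ
end

section
/- For M(ρ̃) = (ρ̃−α)(β−ρ̃), λ > 0, and m ∈ ℝ, the function f(ρ̃) = ρ̃ − ρ − λ M'(ρ̃) m² / (2(λ + M(ρ̃))²) satisfies f'(ρ̃) > 0 for all ρ̃ ∈ (α,β). -/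
open Set

/-- For `M(ρ̃) = (ρ̃-α)(β-ρ̃)`, `λ > 0`, the function
`f(ρ̃) = ρ̃ - ρ - λ M'(ρ̃) m² / (2(λ + M(ρ̃))²)` satisfies `f' > 0` on `(α,β)`. -/
theorem stmt_2 (α β lam ρ m : ℝ) (hαβ : α < β) (hlam : 0 < lam)
    (f : ℝ → ℝ)
    (hf : ∀ s, f s = s - ρ - lam * (α + β - 2 * s) * m ^ 2
      / (2 * (lam + (s - α) * (β - s)) ^ 2)) :
    ∀ s ∈ Ioo α β, 0 < deriv f s := by
  have hfun : f = fun s => s - ρ - lam * (α + β - 2 * s) * m ^ 2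
      / (2 * (lam + (s - α) * (β - s)) ^ 2) := funext hf
  subst hfun
  rintro s ⟨h1, h2⟩
  have hDpos : 0 < lam + (s - α) * (β - s) := by
    have : 0 < (s - α) * (β - s) := mul_pos (by linarith) (by linarith)
    linarith
  have hP : (2 * (lam + (s - α) * (β - s)) ^ 2) ≠ 0 := by positivity
  -- derivative of inner α + β - 2s
  have hinner : HasDerivAt (fun s : ℝ => α + β - 2 * s) (-2) s := by
    simpa using ((hasDerivAt_id s).const_mul (2:ℝ)).const_sub (α + β)
  have hnum : HasDerivAt (fun s : ℝ => lam * (α + β - 2 * s) * m ^ 2)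
      (lam * (-2) * m ^ 2) s := (hinner.const_mul lam).mul_const (m ^ 2)
  have hM : HasDerivAt (fun s : ℝ => lam + (s - α) * (β - s))
      (1 * (β - s) + (s - α) * (-1)) s :=
    (((hasDerivAt_id s).sub_const α).mul ((hasDerivAt_id s).const_sub β)).const_add lam
  have hden : HasDerivAt (fun s : ℝ => 2 * (lam + (s - α) * (β - s)) ^ 2)
      (2 * ((2 : ℕ) * (lam + (s - α) * (β - s)) ^ (2 - 1)
        * (1 * (β - s) + (s - α) * (-1)))) s := (hM.pow 2).const_mul 2
  have hdf : HasDerivAt (fun s : ℝ => s - ρ - lam * (α + β - 2 * s) * m ^ 2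
      / (2 * (lam + (s - α) * (β - s)) ^ 2))
      (1 - (lam * (-2) * m ^ 2 * (2 * (lam + (s - α) * (β - s)) ^ 2)
        - lam * (α + β - 2 * s) * m ^ 2
          * (2 * ((2 : ℕ) * (lam + (s - α) * (β - s)) ^ (2 - 1)
            * (1 * (β - s) + (s - α) * (-1)))))
        / (2 * (lam + (s - α) * (β - s)) ^ 2) ^ 2) s :=
    ((hasDerivAt_id s).sub_const ρ).sub (hnum.div hden hP)
  rw [hdf.deriv]
  set D := lam + (s - α) * (β - s) with hDdef
  have key : lam * (-2) * m ^ 2 * (2 * D ^ 2)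
      - lam * (α + β - 2 * s) * m ^ 2
        * (2 * ((2 : ℕ) * D ^ (2 - 1) * (1 * (β - s) + (s - α) * (-1)))) ≤ 0 := by
    have h3 : 1 * (β - s) + (s - α) * (-1) = α + β - 2 * s := by ring
    rw [h3]
    have e1 : (0:ℝ) ≤ lam * m ^ 2 * D ^ 2 := by positivity
    have e2 : (0:ℝ) ≤ lam * m ^ 2 * D * (α + β - 2 * s) ^ 2 := by positivity
    push_cast
    nlinarith [e1, e2]
  have hfrac : (lam * (-2) * m ^ 2 * (2 * D ^ 2)
      - lam * (α + β - 2 * s) * m ^ 2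
        * (2 * ((2 : ℕ) * D ^ (2 - 1) * (1 * (β - s) + (s - α) * (-1)))))
      / (2 * D ^ 2) ^ 2 ≤ 0 :=
    div_nonpos_of_nonpos_of_nonneg key (by positivity)
  linarith
end

section
/- For M(ρ̃) = (ρ̃−α)(β−ρ̃) and λ > 0, m ≠ 0, the function f(ρ̃) = ρ̃ − ρ − λ M'(ρ̃) m²/(2(λ+M(ρ̃))²) satisfies f''(ρ̃) < 0 for α < ρ̃ < (α+β)/2 and f''(ρ̃) > 0 for (α+β)/2 < ρ̃ < β. -/
/-!
Write `w(s) = λ + (s-α)(β-s)` and `u = w' = α+β-2s`, so `u' = -2` and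
`f = s - ρ - c·u/w²` with `c = λm²/2 > 0`. Differentiating twice,
`(u/w²)'' = 6u(u² + 2w)/w⁴`, and on `(α, β)` we have `w > 0`, so
`f'' = -6c·u(u² + 2w)/w⁴` has the sign of `-u`, i.e. of `s - (α+β)/2`.
-/

open Set

section QuotientBySquare

variable {w u : ℝ → ℝ} {d x : ℝ}

theorem hasDerivAt_div_sq_of_hasDerivAt (hw : HasDerivAt w (u x) x) (hu : HasDerivAt u d x)
    (hx : w x ≠ 0) :
    HasDerivAt (fun s => u s / w s ^ 2) ((d * w x - 2 * u x ^ 2) / w x ^ 3) x :=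
  (hu.fun_div (hw.fun_pow 2) (pow_ne_zero 2 hx)).congr_deriv (by field_simp; ring)

theorem hasDerivAt_div_cube_of_hasDerivAt (hw : HasDerivAt w (u x) x) (hu : HasDerivAt u d x)
    (hx : w x ≠ 0) :
    HasDerivAt (fun s => (d * w s - 2 * u s ^ 2) / w s ^ 3)
      (6 * u x * (u x ^ 2 - d * w x) / w x ^ 4) x :=
  (((hw.const_mul d).fun_sub ((hu.fun_pow 2).const_mul 2)).fun_div (hw.fun_pow 3)
    (pow_ne_zero 3 hx)).congr_deriv (by field_simp; ring)

theorem deriv_deriv_sub_mul_div_sq {U : Set ℝ} (hU : IsOpen U) (c ρ : ℝ)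
    (hw : ∀ x, HasDerivAt w (u x) x) (hu : ∀ x, HasDerivAt u d x) (hw0 : ∀ x ∈ U, w x ≠ 0)
    (hx : x ∈ U) :
    deriv (deriv fun s => s - ρ - c * (u s / w s ^ 2)) x
      = -c * (6 * u x * (u x ^ 2 - d * w x) / w x ^ 4) := by
  have hderiv : deriv (fun s => s - ρ - c * (u s / w s ^ 2)) =ᶠ[nhds x]
      fun s => 1 - c * ((d * w s - 2 * u s ^ 2) / w s ^ 3) := by
    filter_upwards [hU.mem_nhds hx] with y hy
    exact (((hasDerivAt_id' y).sub_const ρ).fun_sub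
      ((hasDerivAt_div_sq_of_hasDerivAt (hw y) (hu y) (hw0 y hy)).const_mul c)).deriv
  rw [hderiv.deriv_eq, ((hasDerivAt_const x 1).fun_sub
    ((hasDerivAt_div_cube_of_hasDerivAt (hw x) (hu x) (hw0 x hx)).const_mul c)).deriv]
  ring

end QuotientBySquare

theorem hasDerivAt_add_sub_mul_sub (lam α β x : ℝ) :
    HasDerivAt (fun s => lam + (s - α) * (β - s)) (α + β - 2 * x) x :=
  ((((hasDerivAt_id' x).sub_const α).fun_mul ((hasDerivAt_id' x).const_sub β)).const_add
    lam).congr_deriv (by ring)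

theorem hasDerivAt_add_sub_two_mul (α β x : ℝ) :
    HasDerivAt (fun s => α + β - 2 * s) (-2) x := by
  simpa using ((hasDerivAt_id' x).const_mul 2).const_sub (α + β)

theorem stmt_3_general (α β lam ρ m : ℝ) (hlam : 0 < lam) (hm : m ≠ 0)
    (f : ℝ → ℝ)
    (hf : ∀ s, f s = s - ρ - lam * (α + β - 2 * s) * m ^ 2
      / (2 * (lam + (s - α) * (β - s)) ^ 2)) :
    (∀ s ∈ Ioo α ((α + β) / 2), deriv (deriv f) s < 0) ∧
    (∀ s ∈ Ioo ((α + β) / 2) β, 0 < deriv (deriv f) s) := by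
  have hw : ∀ s ∈ Ioo α β, 0 < lam + (s - α) * (β - s) := fun s hs =>
    add_pos hlam (mul_pos (sub_pos.2 hs.1) (sub_pos.2 hs.2))
  have hf' : f = fun s => s - ρ - lam * m ^ 2 / 2 *
      ((α + β - 2 * s) / (lam + (s - α) * (β - s)) ^ 2) := by
    funext s
    rw [hf, mul_right_comm, mul_div_mul_comm]
  have hf'' (s : ℝ) (hs : s ∈ Ioo α β) : deriv (deriv f) s = -(3 * lam * m ^ 2) *
      ((α + β - 2 * s) * ((α + β - 2 * s) ^ 2 + 2 * (lam + (s - α) * (β - s)))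
        / (lam + (s - α) * (β - s)) ^ 4) := by
    rw [hf', deriv_deriv_sub_mul_div_sq isOpen_Ioo _ ρ (hasDerivAt_add_sub_mul_sub lam α β)
      (hasDerivAt_add_sub_two_mul α β) (fun y hy => (hw y hy).ne') hs]
    ring
  have hc : -(3 * lam * m ^ 2) < 0 := neg_lt_zero.2 (by positivity)
  constructor
  · rintro s ⟨hαs, hs⟩
    have hαβs : s ∈ Ioo α β := ⟨hαs, by linarith⟩
    have hu : 0 < α + β - 2 * s := by linarith
    have hws := hw s hαβs
    rw [hf'' s hαβs]
    exact mul_neg_of_neg_of_pos hc (by positivity)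
  · rintro s ⟨hs, hsβ⟩
    have hαβs : s ∈ Ioo α β := ⟨by linarith, hsβ⟩
    have hu : α + β - 2 * s < 0 := by linarith
    have hws := hw s hαβs
    rw [hf'' s hαβs]
    exact mul_pos_of_neg_of_neg hc
      (div_neg_of_neg_of_pos (mul_neg_of_neg_of_pos hu (by positivity)) (by positivity))

/-- For `M(ρ̃) = (ρ̃-α)(β-ρ̃)`, `λ > 0`, `m ≠ 0`, the function
`f(ρ̃) = ρ̃ - ρ - λ M'(ρ̃) m²/(2(λ+M(ρ̃))²)` satisfies `f'' < 0` on `(α, (α+β)/2)`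
and `f'' > 0` on `((α+β)/2, β)`. -/
theorem stmt_3 (α β lam ρ m : ℝ) (hαβ : α < β) (hlam : 0 < lam) (hm : m ≠ 0)
    (f : ℝ → ℝ)
    (hf : ∀ s, f s = s - ρ - lam * (α + β - 2 * s) * m ^ 2
      / (2 * (lam + (s - α) * (β - s)) ^ 2)) :
    (∀ s ∈ Ioo α ((α + β) / 2), deriv (deriv f) s < 0) ∧
    (∀ s ∈ Ioo ((α + β) / 2) β, 0 < deriv (deriv f) s) :=
  stmt_3_general α β lam ρ m hlam hm f hf
end

section
/- Let α < β, λ > 0, m ∈ ℝ and suppose α − (β−α)m²/(2λ) < ρ < β + (β−α)m²/(2λ) and ρ ≠ (α+β)/2. Then the function f(ρ̃) = ρ̃ − ρ − λ(α+β−2ρ̃)m²/(2(λ+(ρ̃−α)(β−ρ̃))²) has a unique root ρ* in the open interval (α,β). -/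
/-! On `[α, β]` the denominator `D = λ + M` is at least `λ > 0`, and since `D' = α + β - 2s` the
quotient rule gives `f' = 1 + λ m² (D + D'²) / D³ > 0`, so `f` is strictly increasing there. At the
endpoints `M` vanishes, and the two bounds on `ρ` say exactly that `f(α) < 0 < f(β)`. -/

open Set

theorem existsUnique_mem_Ioo_eq_zero_of_strictMonoOn {f : ℝ → ℝ} {a b : ℝ} (hab : a ≤ b)
    (hcont : ContinuousOn f (Icc a b)) (hmono : StrictMonoOn f (Icc a b))
    (ha : f a < 0) (hb : 0 < f b) : ∃! x, x ∈ Ioo a b ∧ f x = 0 := by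
  obtain ⟨x, hx, hfx⟩ := intermediate_value_Ioo hab hcont ⟨ha, hb⟩
  refine ⟨x, ⟨hx, hfx⟩, fun y ⟨hy, hfy⟩ => ?_⟩
  exact hmono.injOn (Ioo_subset_Icc_self hy) (Ioo_subset_Icc_self hx) (hfy.trans hfx.symm)

section Residual

variable (α β lam ρ m : ℝ)

-- `lam + (s - α) * (β - s)` is `λ + M(s)` in the paper's notation.
noncomputable def residualFn (s : ℝ) : ℝ :=
  s - ρ - lam * (α + β - 2 * s) * m ^ 2 / (2 * (lam + (s - α) * (β - s)) ^ 2)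

variable {α β lam}

theorem lam_add_mul_pos (hlam : 0 < lam) {s : ℝ} (hs : s ∈ Icc α β) :
    0 < lam + (s - α) * (β - s) := by
  have : 0 ≤ (s - α) * (β - s) := mul_nonneg (by linarith [hs.1]) (by linarith [hs.2])
  linarith

theorem hasDerivAt_residualFn {s : ℝ} (hs : lam + (s - α) * (β - s) ≠ 0) :
    HasDerivAt (residualFn α β lam ρ m)
      (1 + lam * m ^ 2 * (lam + (s - α) * (β - s) + (α + β - 2 * s) ^ 2)
        / (lam + (s - α) * (β - s)) ^ 3) s := by
  have hD : HasDerivAt (fun s => lam + (s - α) * (β - s)) (α + β - 2 * s) s :=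
    ((((hasDerivAt_id' s).sub_const α).mul ((hasDerivAt_id' s).const_sub β)).const_add
      lam).congr_deriv (by ring)
  have hnum : HasDerivAt (fun s => lam * (α + β - 2 * s) * m ^ 2) (-2 * lam * m ^ 2) s :=
    (((((hasDerivAt_id' s).const_mul 2).const_sub (α + β)).const_mul lam).mul_const
      (m ^ 2)).congr_deriv (by ring)
  have hden := (hD.pow 2).const_mul 2
  refine (((hasDerivAt_id' s).sub_const ρ).sub
    (hnum.div hden (mul_ne_zero two_ne_zero (pow_ne_zero 2 hs)))).congr_deriv ?_
  simp only [Pi.pow_apply, Nat.cast_ofNat]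
  generalize lam + (s - α) * (β - s) = D at hs ⊢
  field_simp
  ring

theorem continuousOn_residualFn (hlam : 0 < lam) :
    ContinuousOn (residualFn α β lam ρ m) (Icc α β) := fun _ hs =>
  (hasDerivAt_residualFn ρ m (lam_add_mul_pos hlam hs).ne').continuousAt.continuousWithinAt

theorem strictMonoOn_residualFn (hlam : 0 < lam) :
    StrictMonoOn (residualFn α β lam ρ m) (Icc α β) := by
  refine strictMonoOn_of_deriv_pos (convex_Icc α β) (continuousOn_residualFn ρ m hlam) ?_
  intro s hs
  rw [interior_Icc] at hs
  have hD := lam_add_mul_pos hlam (Ioo_subset_Icc_self hs)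
  rw [(hasDerivAt_residualFn ρ m hD.ne').deriv]
  positivity

theorem residualFn_left (hlam : lam ≠ 0) :
    residualFn α β lam ρ m α = α - ρ - (β - α) * m ^ 2 / (2 * lam) := by
  simp only [residualFn, sub_self, zero_mul, add_zero]
  field_simp
  ring

theorem residualFn_right (hlam : lam ≠ 0) :
    residualFn α β lam ρ m β = β - ρ + (β - α) * m ^ 2 / (2 * lam) := by
  simp only [residualFn, sub_self, mul_zero, add_zero]
  field_simp
  ring

end Residual

theorem stmt_5_general (α β lam ρ m : ℝ) (hαβ : α < β) (hlam : 0 < lam)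
    (hρl : α - (β - α) * m ^ 2 / (2 * lam) < ρ)
    (hρr : ρ < β + (β - α) * m ^ 2 / (2 * lam))
    (f : ℝ → ℝ)
    (hf : ∀ s, f s = s - ρ - lam * (α + β - 2 * s) * m ^ 2
      / (2 * (lam + (s - α) * (β - s)) ^ 2)) :
    ∃! x : ℝ, x ∈ Ioo α β ∧ f x = 0 := by
  obtain rfl : f = residualFn α β lam ρ m := funext hf
  refine existsUnique_mem_Ioo_eq_zero_of_strictMonoOn hαβ.le (continuousOn_residualFn ρ m hlam)
    (strictMonoOn_residualFn ρ m hlam) ?_ ?_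
  · rw [residualFn_left ρ m hlam.ne']
    linarith
  · rw [residualFn_right ρ m hlam.ne']
    linarith

/-- If `α - (β-α)m²/(2λ) < ρ < β + (β-α)m²/(2λ)` and `ρ ≠ (α+β)/2`, then
`f(ρ̃) = ρ̃ - ρ - λ(α+β-2ρ̃)m²/(2(λ+(ρ̃-α)(β-ρ̃))²)` has a unique root in `(α,β)`. -/
theorem stmt_5 (α β lam ρ m : ℝ) (hαβ : α < β) (hlam : 0 < lam)
    (hρl : α - (β - α) * m ^ 2 / (2 * lam) < ρ)
    (hρr : ρ < β + (β - α) * m ^ 2 / (2 * lam))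
    (hρmid : ρ ≠ (α + β) / 2)
    (f : ℝ → ℝ)
    (hf : ∀ s, f s = s - ρ - lam * (α + β - 2 * s) * m ^ 2
      / (2 * (lam + (s - α) * (β - s)) ^ 2)) :
    ∃! x : ℝ, x ∈ Ioo α β ∧ f x = 0 :=
  stmt_5_general α β lam ρ m hαβ hlam hρl hρr f hf
end

section
/- If ρ ≤ α − (β−α)m²/(2λ), then the unique minimizer of F(ρ̃,m̃) = (1/2)(ρ̃−ρ)² + (1/2)(m̃−m)² + (λ/2)φ(ρ̃,m̃) over the set where φ is finite is (ρ*, m*) = (α, 0), where φ(ρ̃,m̃) = m̃²/((ρ̃−α)(β−ρ̃)) for ρ̃ ∈ (α,β) and φ = 0 at (α,0) and (β,0), +∞ elsewhere. -/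
open Set

lemma key_ineq (α β lam ρ m p1 p2 : ℝ) (hlam : 0 < lam)
    (hρ : ρ ≤ α - (β - α) * m ^ 2 / (2 * lam))
    (h1 : α < p1) (h2 : p1 < β) :
    (1/2) * (α - ρ)^2 + (1/2) * (0 - m)^2
      < (1/2) * (p1 - ρ)^2 + (1/2) * (p2 - m)^2
        + (lam/2) * (p2^2 / ((p1 - α) * (β - p1))) := by
  set a := p1 - α with hadef
  set b := β - p1 with hbdef
  have ha : 0 < a := by simp only [hadef]; linarith
  have hb : 0 < b := by simp only [hbdef]; linarith
  have hab : 0 < a * b := mul_pos ha hb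
  set t := p2^2 / (a * b) with htdef
  have ht : t * (a * b) = p2^2 := div_mul_cancel₀ _ hab.ne'
  have hρ2 : (a + b) * m ^ 2 ≤ 2 * lam * (α - ρ) := by
    have h : (β - α) * m ^ 2 / (2 * lam) ≤ α - ρ := by linarith
    rw [div_le_iff₀ (by linarith)] at h
    have hba : β - α = a + b := by simp only [hadef, hbdef]; ring
    nlinarith [h]
  have ht2 : lam^3*(a*b+lam) * (t*(a*b)) = lam^3*(a*b+lam) * p2^2 := by rw [ht]
  have hmul : 0 < lam*(a*b+lam) * (lam*(a*b))
      * (a^2 + 2*a*(α-ρ) + p2^2 - 2*p2*m + lam*t) := by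
    have hh1 := mul_le_mul_of_nonneg_left hρ2
      (by positivity : (0:ℝ) ≤ lam*(a*b+lam) * a^2 * b)
    have hh2 := sq_nonneg (lam*(a*b+lam)*p2 - lam*a*b*m)
    have hh3 : (0:ℝ) ≤ lam*a^3*b*m^2*(a*b+b^2+lam) := by positivity
    have hh4 : (0:ℝ) < lam*(a*b+lam)*(lam*(a*b))*a^2 := by positivity
    nlinarith [hh1, hh2, hh3, hh4, ht2]
  have hE : 0 < a^2 + 2*a*(α-ρ) + p2^2 - 2*p2*m + lam*t := by
    by_contra h
    push_neg at h
    nlinarith [mul_nonpos_of_nonneg_of_nonpos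
      (by positivity : (0:ℝ) ≤ lam*(a*b+lam) * (lam*(a*b))) h]
  have hid : (1/2) * (p1 - ρ)^2 + (1/2) * (p2 - m)^2 + (lam/2) * t
      - ((1/2) * (α - ρ)^2 + (1/2) * (0 - m)^2)
      = (1/2) * (a^2 + 2*a*(α-ρ) + p2^2 - 2*p2*m + lam*t) := by
    simp only [hadef]; ring
  clear_value a b t
  linarith

/-- If `ρ ≤ α - (β-α)m²/(2λ)`, then the unique minimizer of
`F(ρ̃,m̃) = ½(ρ̃-ρ)² + ½(m̃-m)² + (λ/2)φ(ρ̃,m̃)` is `(α, 0)`, where `φ(ρ̃,m̃) =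
m̃²/((ρ̃-α)(β-ρ̃))` for `ρ̃ ∈ (α,β)`, `φ = 0` at `(α,0)` and `(β,0)`, `+∞` elsewhere. -/
theorem stmt_7 (α β lam ρ m : ℝ) (hαβ : α < β) (hlam : 0 < lam)
    (hρ : ρ ≤ α - (β - α) * m ^ 2 / (2 * lam))
    (φ : ℝ × ℝ → EReal)
    (hφ : ∀ p, φ p =
      if p.1 ∈ Ioo α β then ((p.2 ^ 2 / ((p.1 - α) * (β - p.1)) : ℝ) : EReal)
      else if (p = (α, 0) ∨ p = (β, 0)) then 0 else ⊤)
    (F : ℝ × ℝ → EReal)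
    (hF : ∀ p, F p = (((1 / 2) * (p.1 - ρ) ^ 2 + (1 / 2) * (p.2 - m) ^ 2 : ℝ) : EReal)
      + ((lam / 2 : ℝ) : EReal) * φ p) :
    (∀ p : ℝ × ℝ, F (α, 0) ≤ F p) ∧
    (∀ p : ℝ × ℝ, (∀ q : ℝ × ℝ, F p ≤ F q) → p = (α, 0)) := by
  have hρα : ρ ≤ α := by
    have : 0 ≤ (β - α) * m ^ 2 / (2 * lam) :=
      div_nonneg (mul_nonneg (by linarith) (sq_nonneg m)) (by linarith)
    linarith
  have hF0 : F (α, 0) = (((1/2) * (α - ρ)^2 + (1/2) * (0 - m)^2 : ℝ) : EReal) := by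
    rw [hF, hφ]
    simp [mem_Ioo]
  have main : ∀ p : ℝ × ℝ, p ≠ (α, 0) → F (α, 0) < F p := by
    intro p hp
    rw [hF p, hφ p, hF0]
    by_cases h1 : p.1 ∈ Ioo α β
    · rw [if_pos h1, ← EReal.coe_mul, ← EReal.coe_add]
      exact_mod_cast key_ineq α β lam ρ m p.1 p.2 hlam hρ h1.1 h1.2
    · rw [if_neg h1]
      by_cases h2 : p = (α, 0) ∨ p = (β, 0)
      · have hpβ : p = (β, 0) := h2.resolve_left hp
        rw [if_pos h2, mul_zero, add_zero, hpβ, EReal.coe_lt_coe_iff]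
        simp only
        nlinarith [hαβ]
      · rw [if_neg h2, EReal.coe_mul_top_of_pos (by positivity : (0:ℝ) < lam/2),
          EReal.coe_add_top]
        exact EReal.coe_lt_top _
  constructor
  · intro p
    by_cases hp : p = (α, 0)
    · rw [hp]
    · exact (main p hp).le
  · intro p hmin
    by_contra hne
    exact absurd (hmin (α, 0)) (not_le.mpr (main p hne))
end

section
/- Moreau-like identity for the extended proximal operator: for a proper convex lower-semicontinuous function f on ℝⁿ and a symmetric positive definite matrix M, one has Prox_{f*}^{M}(y) = y − M⁻¹ Prox_{f}^{M⁻¹}(M y), where Prox_g^{A}(y) = argmin_x (1/2)‖x−y‖_A² + g(x) with ‖x‖_A² = xᵀAx, and f* is the convex conjugate of f. -/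
/-!
Put `u = y - M⁻¹ v`. Minimality of `v` together with convexity of `f` gives the first-order
condition `u ∈ ∂f(v)`: compare the objective at `v` with its value at `v + t (w - v)` and let
`t → 0⁺`. Fenchel–Young then yields `f*(u) = ⟨u, v⟩ - f(v)`, while `f*(x) ≥ ⟨x, v⟩ - f(v)` for
every `x`, so it remains to see that `x ↦ ½‖x - y‖²_M + ⟨x, v⟩` is minimized at `y - M⁻¹ v`,
which is completing the square. If `f(v) = -∞` then `f* ≡ +∞` and both sides are `+∞`.
-/

open Matrix Set

namespace Matrix

variable {ι R : Type*}

lemma IsSymm.dotProduct_mulVec_comm [Fintype ι] [CommSemiring R] {S : Matrix ι ι R}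
    (hS : S.IsSymm) (a b : ι → R) : a ⬝ᵥ S *ᵥ b = b ⬝ᵥ S *ᵥ a := by
  rw [dotProduct_mulVec, ← mulVec_transpose, hS.eq, dotProduct_comm]

lemma IsSymm.add_dotProduct_mulVec_add [Fintype ι] [CommSemiring R] {S : Matrix ι ι R}
    (hS : S.IsSymm) (a b : ι → R) :
    (a + b) ⬝ᵥ S *ᵥ (a + b) = a ⬝ᵥ S *ᵥ a + 2 * (a ⬝ᵥ S *ᵥ b) + b ⬝ᵥ S *ᵥ b := by
  simp only [mulVec_add, dotProduct_add, add_dotProduct, hS.dotProduct_mulVec_comm b a]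
  ring

lemma PosSemidef.isSymm {S : Matrix ι ι ℝ} (hS : S.PosSemidef) : S.IsSymm :=
  isHermitian_iff_isSymm.mp hS.isHermitian

lemma PosSemidef.isMinOn_half_dotProduct_mulVec_add [Fintype ι] {M : Matrix ι ι ℝ}
    (hM : M.PosSemidef) (y b : ι → ℝ) :
    IsMinOn (fun x => 1 / 2 * ((x - y) ⬝ᵥ M *ᵥ (x - y)) + x ⬝ᵥ M *ᵥ b) univ (y - b) := by
  intro x _
  have hsq := hM.isSymm.add_dotProduct_mulVec_add (x - y) b
  have hnonneg : 0 ≤ (x - y + b) ⬝ᵥ M *ᵥ (x - y + b) := by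
    simpa using hM.dotProduct_mulVec_nonneg (x - y + b)
  simp only [mem_ofPred_eq, sub_sub_cancel_left, mulVec_neg, dotProduct_neg, neg_dotProduct,
    neg_neg, sub_dotProduct] at hsq ⊢
  linarith

end Matrix

lemma nonpos_of_forall_le_mul {A B : ℝ} (h : ∀ t : ℝ, 0 < t → t ≤ 1 → A ≤ t * B) : A ≤ 0 := by
  refine ge_of_tendsto (((continuous_id.mul continuous_const).tendsto' 0 0 (zero_mul B)).mono_left
    (nhdsWithin_le_nhds (s := Ioi 0))) ?_
  filter_upwards [Ioc_mem_nhdsGT one_pos] with t ht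
  exact h t ht.1 ht.2

section ConvexAnalysis

variable {ι : Type*} [Fintype ι]

noncomputable def convexConjugate (f : (ι → ℝ) → EReal) (z : ι → ℝ) : EReal :=
  ⨆ x, ((z ⬝ᵥ x : ℝ) : EReal) - f x

def HasSubgradientAt (f : (ι → ℝ) → EReal) (u v : ι → ℝ) : Prop :=
  ∀ w, f v + ((u ⬝ᵥ (w - v) : ℝ) : EReal) ≤ f w

lemma convexConjugate_eq_top_of_eq_bot {f : (ι → ℝ) → EReal} {v : ι → ℝ} (hv : f v = ⊥)
    (z : ι → ℝ) : convexConjugate f z = ⊤ :=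
  top_unique <| (le_iSup (fun x => ((z ⬝ᵥ x : ℝ) : EReal) - f x) v).trans' (by simp [hv])

lemma dotProduct_sub_le_convexConjugate {f : (ι → ℝ) → EReal} {v : ι → ℝ} {c : ℝ}
    (hc : f v = c) (z : ι → ℝ) : ((z ⬝ᵥ v - c : ℝ) : EReal) ≤ convexConjugate f z :=
  (le_iSup (fun x => ((z ⬝ᵥ x : ℝ) : EReal) - f x) v).trans' (by rw [hc, EReal.coe_sub])

lemma HasSubgradientAt.convexConjugate_le {f : (ι → ℝ) → EReal} {u v : ι → ℝ} {c : ℝ}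
    (h : HasSubgradientAt f u v) (hc : f v = c) :
    convexConjugate f u ≤ ((u ⬝ᵥ v - c : ℝ) : EReal) := by
  refine iSup_le fun w => ?_
  have hw := h w
  rw [hc, ← EReal.coe_add] at hw
  calc ((u ⬝ᵥ w : ℝ) : EReal) - f w
      ≤ ((u ⬝ᵥ w : ℝ) : EReal) - ((c + u ⬝ᵥ (w - v) : ℝ) : EReal) := EReal.sub_le_sub le_rfl hw
    _ = ((u ⬝ᵥ v - c : ℝ) : EReal) := by
      rw [← EReal.coe_sub, dotProduct_sub]
      ring_nf

theorem hasSubgradientAt_of_isMinOn_quadratic_add {f : (ι → ℝ) → EReal}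
    (hconv : ∀ x y : ι → ℝ, ∀ t : ℝ, 0 ≤ t → t ≤ 1 →
      f (t • x + (1 - t) • y) ≤ (t : EReal) * f x + ((1 - t : ℝ) : EReal) * f y)
    {S : Matrix ι ι ℝ} (hS : S.IsSymm) {a v : ι → ℝ} {c : ℝ} (hc : f v = c)
    (hv : IsMinOn (fun x => (((1 / 2 : ℝ) * ((x - a) ⬝ᵥ S *ᵥ (x - a)) : ℝ) : EReal) + f x)
      univ v) :
    HasSubgradientAt f (-(S *ᵥ (v - a))) v := by
  simp only [isMinOn_univ_iff] at hv
  intro w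
  rcases eq_or_ne (f w) ⊤ with hw_top | hw_top
  · exact hw_top ▸ le_top
  have hw_bot : f w ≠ ⊥ := by
    intro hw_bot
    have h := hv w
    rw [hc, hw_bot, EReal.add_bot, ← EReal.coe_add] at h
    exact (EReal.bot_lt_coe _).not_ge h
  obtain ⟨d, hd⟩ : ∃ d : ℝ, f w = d := ⟨_, (EReal.coe_toReal hw_top hw_bot).symm⟩
  have hsegment : ∀ t : ℝ, 0 < t → t ≤ 1 →
      c - d - (v - a) ⬝ᵥ S *ᵥ (w - v) ≤ t * ((w - v) ⬝ᵥ S *ᵥ (w - v) / 2) := by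
    intro t ht0 ht1
    have hseg : t • w + (1 - t) • v = v + t • (w - v) := by module
    have h := (hv (v + t • (w - v))).trans (add_le_add le_rfl (hseg ▸ hconv w v t ht0.le ht1))
    rw [hc, hd] at h
    norm_cast at h
    have hexp := hS.add_dotProduct_mulVec_add (v - a) (t • (w - v))
    rw [show v + t • (w - v) - a = v - a + t • (w - v) by abel] at h
    simp only [mulVec_smul, dotProduct_smul, smul_dotProduct, smul_eq_mul] at hexp
    nlinarith
  have hlim := nonpos_of_forall_le_mul hsegment
  rw [hc, hd, ← EReal.coe_add, EReal.coe_le_coe_iff, neg_dotProduct, dotProduct_comm,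
    ← hS.dotProduct_mulVec_comm]
  linarith

end ConvexAnalysis

theorem stmt_8_general (n : ℕ) (f : (Fin n → ℝ) → EReal)
    (hproper : ∃ x, f x ≠ ⊤)
    (hconv : ∀ x y : Fin n → ℝ, ∀ t : ℝ, 0 ≤ t → t ≤ 1 →
      f (t • x + (1 - t) • y) ≤ (t : EReal) * f x + ((1 - t : ℝ) : EReal) * f y)
    (M : Matrix (Fin n) (Fin n) ℝ) (hM : M.PosDef)
    (fstar : (Fin n → ℝ) → EReal)
    (hfstar : ∀ z, fstar z = ⨆ x : Fin n → ℝ, ((z ⬝ᵥ x : ℝ) : EReal) - f x)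
    (y v : Fin n → ℝ)
    (hv : ∀ x : Fin n → ℝ,
      (((1 / 2 : ℝ) * ((v - M.mulVec y) ⬝ᵥ M⁻¹.mulVec (v - M.mulVec y)) : ℝ) : EReal) + f v ≤
      (((1 / 2 : ℝ) * ((x - M.mulVec y) ⬝ᵥ M⁻¹.mulVec (x - M.mulVec y)) : ℝ) : EReal) + f x) :
    ∀ x : Fin n → ℝ,
      (((1 / 2 : ℝ) * ((y - M⁻¹.mulVec v - y) ⬝ᵥ M.mulVec (y - M⁻¹.mulVec v - y)) : ℝ) : EReal)
        + fstar (y - M⁻¹.mulVec v) ≤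
      (((1 / 2 : ℝ) * ((x - y) ⬝ᵥ M.mulVec (x - y)) : ℝ) : EReal) + fstar x := by
  intro x
  obtain rfl : fstar = convexConjugate f := funext hfstar
  rcases eq_or_ne (f v) ⊥ with hv_bot | hv_bot
  · simp only [convexConjugate_eq_top_of_eq_bot hv_bot, EReal.coe_add_top, le_refl]
  have hv_top : f v ≠ ⊤ := by
    obtain ⟨x₀, hx₀⟩ := hproper
    intro hv_top
    have h := hv x₀
    rw [hv_top, EReal.coe_add_top] at h
    exact (EReal.add_lt_top (EReal.coe_ne_top _) hx₀).not_ge h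
  obtain ⟨c, hc⟩ : ∃ c : ℝ, f v = c := ⟨_, (EReal.coe_toReal hv_top hv_bot).symm⟩
  have hdet : IsUnit M.det := hM.det_pos.ne'.isUnit
  have hsub : HasSubgradientAt f (y - M⁻¹ *ᵥ v) v := by
    convert hasSubgradientAt_of_isMinOn_quadratic_add hconv hM.posSemidef.inv.isSymm hc
      fun x _ => hv x using 1
    rw [mulVec_sub, mulVec_mulVec, nonsing_inv_mul M hdet, one_mulVec, neg_sub]
  have hmin := hM.posSemidef.isMinOn_half_dotProduct_mulVec_add y (M⁻¹ *ᵥ v) (mem_univ x)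
  simp only [mem_ofPred_eq, mulVec_mulVec, mul_nonsing_inv M hdet, one_mulVec] at hmin
  calc _ ≤ (((1 / 2 : ℝ) * ((y - M⁻¹ *ᵥ v - y) ⬝ᵥ M *ᵥ (y - M⁻¹ *ᵥ v - y)) : ℝ) : EReal)
          + (((y - M⁻¹ *ᵥ v) ⬝ᵥ v - c : ℝ) : EReal) := by
        gcongr
        exact hsub.convexConjugate_le hc
    _ ≤ (((1 / 2 : ℝ) * ((x - y) ⬝ᵥ M *ᵥ (x - y)) : ℝ) : EReal) + ((x ⬝ᵥ v - c : ℝ) : EReal) := by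
        norm_cast
        linarith
    _ ≤ _ := by
        gcongr
        exact dotProduct_sub_le_convexConjugate hc x

/-- Moreau-like identity for the extended (matrix-weighted) proximal operator:
for a proper convex lsc `f : ℝⁿ → ℝ ∪ {+∞}` and a symmetric positive definite `M`,
`Prox_{f*}^M (y) = y - M⁻¹ Prox_f^{M⁻¹}(M y)`: if `v` minimizes
`x ↦ ½⟪x - My, M⁻¹(x - My)⟫ + f x`, then `y - M⁻¹ v` minimizes
`x ↦ ½⟪x - y, M(x - y)⟫ + f* x`, where `f*` is the convex conjugate of `f`. -/
theorem stmt_8 (n : ℕ) (f : (Fin n → ℝ) → EReal)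
    (hproper : ∃ x, f x ≠ ⊤)
    (hconv : ∀ x y : Fin n → ℝ, ∀ t : ℝ, 0 ≤ t → t ≤ 1 →
      f (t • x + (1 - t) • y) ≤ (t : EReal) * f x + ((1 - t : ℝ) : EReal) * f y)
    (hlsc : LowerSemicontinuous f)
    (M : Matrix (Fin n) (Fin n) ℝ) (hMsymm : M.IsSymm) (hM : M.PosDef)
    (fstar : (Fin n → ℝ) → EReal)
    (hfstar : ∀ z, fstar z = ⨆ x : Fin n → ℝ, ((z ⬝ᵥ x : ℝ) : EReal) - f x)
    (y v : Fin n → ℝ)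
    (hv : ∀ x : Fin n → ℝ,
      (((1 / 2 : ℝ) * ((v - M.mulVec y) ⬝ᵥ M⁻¹.mulVec (v - M.mulVec y)) : ℝ) : EReal) + f v ≤
      (((1 / 2 : ℝ) * ((x - M.mulVec y) ⬝ᵥ M⁻¹.mulVec (x - M.mulVec y)) : ℝ) : EReal) + f x) :
    ∀ x : Fin n → ℝ,
      (((1 / 2 : ℝ) * ((y - M⁻¹.mulVec v - y) ⬝ᵥ M.mulVec (y - M⁻¹.mulVec v - y)) : ℝ) : EReal)
        + fstar (y - M⁻¹.mulVec v) ≤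
      (((1 / 2 : ℝ) * ((x - y) ⬝ᵥ M.mulVec (x - y)) : ℝ) : EReal) + fstar x :=
  stmt_8_general n f hproper hconv M hM fstar hfstar y v hv
end
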